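/- arXiv:1512.02723 — 8 statements merged into one kernel-verified Lean document; each statement's English description precedes it below -/
import Mathlib

section
/- Let (U,𝒟⁺) be a dynamic covering information system of (U,𝒟), where 𝒟 = {𝒞₁,…,𝒞_m} is a family of coverings of U and 𝒟⁺ = {𝒞₁,…,𝒞_m,𝒞_{m+1}} is obtained by adding one more covering 𝒞_{m+1} of U. Then the type-1 characteristic matrices satisfy Γ(𝒟⁺) = Γ(𝒟) ∨ Γ({𝒞_{m+1}}), where Γ({𝒞_{m+1}}) = M_{𝒞_{m+1}} • M_{𝒞_{m+1}}ᵀ and ∨ denotes entrywise maximum of Boolean matrices. -/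
/-- Boolean product of Boolean matrices: `(A • B) i j = ⋁ k, A i k ∧ B k j`. -/
def bDot {α β γ : Type*} [Fintype β] (A : α → β → Bool) (B : β → γ → Bool) :
    α → γ → Bool := fun i j => decide (∃ k, A i k = true ∧ B k j = true)

/-- The `⊙` product of Boolean matrices: `(A ⊙ B) i j = 1` iff `A i k ≤ B k j` for all `k`. -/
def oDot {α β γ : Type*} [Fintype β] (A : α → β → Bool) (B : β → γ → Bool) :
    α → γ → Bool := fun i j => decide (∀ k, A i k ≤ B k j)

/-- Matrix representation of a family of subsets of `Fin n` indexed by `ι`. -/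
def Mrep {n : ℕ} {ι : Type*} (C : ι → Finset (Fin n)) : Fin n → ι → Bool :=
  fun i j => decide (i ∈ C j)

/-- Type-1 characteristic matrix `Γ(𝒞) = M_𝒞 • M_𝒞ᵀ`. -/
def Gamma {n : ℕ} {ι : Type*} [Fintype ι] (C : ι → Finset (Fin n)) :
    Fin n → Fin n → Bool :=
  bDot (Mrep C) (fun k j => Mrep C j k)

/-- Type-2 characteristic matrix `Π(𝒞) = M_𝒞 ⊙ M_𝒞ᵀ`. -/
def Pi2 {n : ℕ} {ι : Type*} [Fintype ι] (C : ι → Finset (Fin n)) :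
    Fin n → Fin n → Bool :=
  oDot (Mrep C) (fun k j => Mrep C j k)

/-- An indexed family of subsets of `Fin n` is a covering: all blocks nonempty
and they cover the universe. -/
def IsCovering {n : ℕ} {ι : Type*} (C : ι → Finset (Fin n)) : Prop :=
  (∀ k, (C k).Nonempty) ∧ ∀ x : Fin n, ∃ k, x ∈ C k

/-- Theorem 3.3: adding a covering 𝒞_{m+1} to 𝒟 = {𝒞₁,…,𝒞_m} gives
`Γ(𝒟⁺) = Γ(𝒟) ∨ Γ({𝒞_{m+1}})` (entrywise maximum). -/
theorem gamma_add_covering {n m : ℕ} (c : Fin m → ℕ) (c' : ℕ)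
    (D : (t : Fin m) → Fin (c t) → Finset (Fin n))
    (C' : Fin c' → Finset (Fin n))
    (hD : ∀ t, IsCovering (D t)) (hC' : IsCovering C') :
    Gamma (Sum.elim (fun q : Σ t : Fin m, Fin (c t) => D q.1 q.2) C')
      = fun i j =>
        Gamma (fun q : Σ t : Fin m, Fin (c t) => D q.1 q.2) i j || Gamma C' i j := by
  funext i j
  simp only [Gamma, bDot, Mrep]
  rw [Bool.eq_iff_iff]
  simp only [Bool.or_eq_true, decide_eq_true_eq]
  constructor
  · rintro ⟨(k | k), hk⟩
    · exact Or.inl ⟨k, hk⟩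
    · exact Or.inr ⟨k, hk⟩
  · rintro (⟨k, hk⟩ | ⟨k, hk⟩)
    · exact ⟨Sum.inl k, hk⟩
    · exact ⟨Sum.inr k, hk⟩
end

section
/- Let (U,𝒟⁺) be a dynamic covering information system of (U,𝒟), where 𝒟 = {𝒞₁,…,𝒞_m} is a family of coverings of U and 𝒟⁺ = {𝒞₁,…,𝒞_m,𝒞_{m+1}} is obtained by adding one more covering 𝒞_{m+1} of U. Then the type-2 characteristic matrices satisfy Π(𝒟⁺) = Π(𝒟) ∧ Π({𝒞_{m+1}}), where Π({𝒞_{m+1}}) = M_{𝒞_{m+1}} ⊙ M_{𝒞_{m+1}}ᵀ and ∧ denotes entrywise minimum of Boolean matrices. -/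
/-- Theorem 3.10: adding a covering 𝒞_{m+1} to 𝒟 gives
`Π(𝒟⁺) = Π(𝒟) ∧ Π({𝒞_{m+1}})` (entrywise minimum). -/
theorem pi_add_covering {n m : ℕ} (c : Fin m → ℕ) (c' : ℕ)
    (D : (t : Fin m) → Fin (c t) → Finset (Fin n))
    (C' : Fin c' → Finset (Fin n))
    (hD : ∀ t, IsCovering (D t)) (hC' : IsCovering C') :
    Pi2 (Sum.elim (fun q : Σ t : Fin m, Fin (c t) => D q.1 q.2) C')
      = fun i j =>
        Pi2 (fun q : Σ t : Fin m, Fin (c t) => D q.1 q.2) i j && Pi2 C' i j := by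
  funext i j
  simp only [Pi2, oDot, Mrep, Sum.forall, Sum.elim_inl, Sum.elim_inr]
  rw [Bool.decide_and]
  congr 1 <;> exact decide_eq_decide.mpr Iff.rfl
end

section
/- Let (U,𝒟⁺) be a dynamic covering information system of (U,𝒟), where 𝒟 = {𝒞₁,…,𝒞_m} is a family of coverings of U and 𝒟⁺ = {𝒞₁,…,𝒞_m,𝒞_{m+1}}. Write Π(𝒟) = (d_ij) and Π(𝒟⁺) = (e_ij), and let a^{m+1}_{ik} denote the entries of M_{𝒞_{m+1}}. Then for all i, j: if d_ij = 0 then e_ij = 0, and if d_ij = 1 then e_ij equals the ⊙-product of the i-th row of M_{𝒞_{m+1}} with the transpose of its j-th row, i.e., e_ij = 1 if a^{m+1}_{ik} ≤ a^{m+1}_{jk} for every k ≤ |𝒞_{m+1}| and e_ij = 0 otherwise. -/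
theorem Pi2_eq_true_iff {n : ℕ} {ι : Type*} [Fintype ι] (C : ι → Finset (Fin n))
    (i j : Fin n) : Pi2 C i j = true ↔ ∀ k, i ∈ C k → j ∈ C k := by
  rw [Pi2, oDot, decide_eq_true_iff]
  simp only [Mrep, Bool.le_iff_imp, decide_eq_true_eq]

theorem Pi2_sum_elim {n : ℕ} {ι ι' : Type*} [Fintype ι] [Fintype ι']
    (C : ι → Finset (Fin n)) (C' : ι' → Finset (Fin n)) (i j : Fin n) :
    Pi2 (Sum.elim C C') i j = (Pi2 C i j && Pi2 C' i j) := by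
  rw [Bool.eq_iff_iff, Bool.and_eq_true, Pi2_eq_true_iff, Pi2_eq_true_iff, Pi2_eq_true_iff,
    Sum.forall]
  rfl

theorem pi_add_covering_entrywise_general {n m : ℕ} (c : Fin m → ℕ) (c' : ℕ)
    (D : (t : Fin m) → Fin (c t) → Finset (Fin n))
    (C' : Fin c' → Finset (Fin n)) :
    ∀ i j : Fin n,
      (Pi2 (fun q : Σ t : Fin m, Fin (c t) => D q.1 q.2) i j = false →
        Pi2 (Sum.elim (fun q : Σ t : Fin m, Fin (c t) => D q.1 q.2) C') i j = false) ∧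
      (Pi2 (fun q : Σ t : Fin m, Fin (c t) => D q.1 q.2) i j = true →
        Pi2 (Sum.elim (fun q : Σ t : Fin m, Fin (c t) => D q.1 q.2) C') i j
          = oDot (Mrep C') (fun k j => Mrep C' j k) i j) := by
  intro i j
  rw [Pi2_sum_elim]
  exact ⟨fun hd => by rw [hd, Bool.false_and], fun hd => by rw [hd, Bool.true_and, Pi2]⟩

/-- Theorem 3.14: with `Π(𝒟) = (d_ij)` and `Π(𝒟⁺) = (e_ij)`, if `d_ij = 0`
then `e_ij = 0`, and if `d_ij = 1` then `e_ij` is the `⊙`-product of the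
`i`-th row of `M_{𝒞_{m+1}}` with the transpose of its `j`-th row. -/
theorem pi_add_covering_entrywise {n m : ℕ} (c : Fin m → ℕ) (c' : ℕ)
    (D : (t : Fin m) → Fin (c t) → Finset (Fin n))
    (C' : Fin c' → Finset (Fin n))
    (hD : ∀ t, IsCovering (D t)) (hC' : IsCovering C') :
    ∀ i j : Fin n,
      (Pi2 (fun q : Σ t : Fin m, Fin (c t) => D q.1 q.2) i j = false →
        Pi2 (Sum.elim (fun q : Σ t : Fin m, Fin (c t) => D q.1 q.2) C') i j = false) ∧
      (Pi2 (fun q : Σ t : Fin m, Fin (c t) => D q.1 q.2) i j = true →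
        Pi2 (Sum.elim (fun q : Σ t : Fin m, Fin (c t) => D q.1 q.2) C') i j
          = oDot (Mrep C') (fun k j => Mrep C' j k) i j) :=
  pi_add_covering_entrywise_general c c' D C'
end

section
/- Let 𝒟 = {𝒞₁,…,𝒞_m} (m ≥ 2) be a family of coverings of U and 𝒟⁻ = {𝒞₁,…,𝒞_{m−1}} obtained by deleting the covering 𝒞_m. Write Γ(𝒟) = (b_ij), Γ(𝒟⁻) = (c⁻_ij), and Δc_ij = Γ({𝒞_m})_ij = (M_{𝒞_m} • M_{𝒞_m}ᵀ)_ij. Then for all i, j: if b_ij = 0 then c⁻_ij = 0; if b_ij = 1 and Δc_ij = 0 then c⁻_ij = 1; and if b_ij = 1 and Δc_ij = 1 then c⁻_ij equals the Boolean product of the i-th row of M_{𝒟⁻} with the transpose of its j-th row. -/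
/-- Theorem 3.19: deleting the last covering 𝒞_m from 𝒟 = {𝒞₁,…,𝒞_m} (m ≥ 2).
With `Γ(𝒟) = (b_ij)`, `Γ(𝒟⁻) = (c⁻_ij)` and `Δc_ij = Γ({𝒞_m})_ij`:
if `b_ij = 0` then `c⁻_ij = 0`; if `b_ij = 1` and `Δc_ij = 0` then `c⁻_ij = 1`;
and if `b_ij = 1` and `Δc_ij = 1` then `c⁻_ij` is the Boolean product of the
`i`-th row of `M_{𝒟⁻}` with the transpose of its `j`-th row. -/
theorem gamma_delete_covering {n m : ℕ} (hm : 1 ≤ m) (c : Fin (m + 1) → ℕ)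
    (D : (t : Fin (m + 1)) → Fin (c t) → Finset (Fin n))
    (hD : ∀ t, IsCovering (D t)) :
    ∀ i j : Fin n,
      (Gamma (fun q : Σ t : Fin (m + 1), Fin (c t) => D q.1 q.2) i j = false →
        Gamma (fun q : Σ t : Fin m, Fin (c t.castSucc) => D q.1.castSucc q.2) i j
          = false) ∧
      (Gamma (fun q : Σ t : Fin (m + 1), Fin (c t) => D q.1 q.2) i j = true →
        Gamma (D (Fin.last m)) i j = false →
        Gamma (fun q : Σ t : Fin m, Fin (c t.castSucc) => D q.1.castSucc q.2) i j
          = true) ∧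
      (Gamma (fun q : Σ t : Fin (m + 1), Fin (c t) => D q.1 q.2) i j = true →
        Gamma (D (Fin.last m)) i j = true →
        Gamma (fun q : Σ t : Fin m, Fin (c t.castSucc) => D q.1.castSucc q.2) i j
          = bDot (Mrep (fun q : Σ t : Fin m, Fin (c t.castSucc) => D q.1.castSucc q.2))
              (fun k j => Mrep (fun q : Σ t : Fin m, Fin (c t.castSucc) =>
                D q.1.castSucc q.2) j k) i j) := by
  intro i j
  refine ⟨?_, ?_, fun _ _ => rfl⟩
  · intro hb
    simp only [Gamma, bDot, Mrep, decide_eq_false_iff_not, decide_eq_true_eq] at hb ⊢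
    rintro ⟨q, hi, hj⟩
    exact hb ⟨⟨q.1.castSucc, q.2⟩, hi, hj⟩
  · intro hb hd
    simp only [Gamma, bDot, Mrep, decide_eq_false_iff_not, decide_eq_true_eq] at hb hd ⊢
    obtain ⟨⟨t, k⟩, hi, hj⟩ := hb
    rcases eq_or_ne t (Fin.last m) with h | h
    · subst h; exact absurd ⟨k, hi, hj⟩ hd
    · obtain ⟨s, hs⟩ := Fin.exists_castSucc_eq.mpr h
      subst hs
      exact ⟨⟨s, k⟩, hi, hj⟩
end

section
/- Let 𝒟 = {𝒞₁,…,𝒞_m} (m ≥ 2) be a family of coverings of U and 𝒟⁻ = {𝒞₁,…,𝒞_{m−1}} obtained by deleting the covering 𝒞_m. Write Π(𝒟) = (d_ij), Π(𝒟⁻) = (e⁻_ij), and Δe_ij = Π({𝒞_m})_ij = (M_{𝒞_m} ⊙ M_{𝒞_m}ᵀ)_ij. Then for all i, j: if d_ij = 1 and Δe_ij = 1 then e⁻_ij = 1; if d_ij = 0 and Δe_ij = 1 then e⁻_ij = 0; and if d_ij = 0 and Δe_ij = 0 then e⁻_ij equals the ⊙-product of the i-th row of M_{𝒟⁻} with the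 transpose of its j-th row. -/
/-! `Π(𝒞)_ij = 1` exactly when every block containing `xᵢ` contains `xⱼ`. Hence the type-2
matrix of a family of coverings is the entrywise conjunction of those of its members, so
`Π(𝒟) = Π(𝒟⁻) ∧ Π({𝒞_m})`, and the three cases are rows of the truth table of `∧`; the last
one is just the definition of `Π(𝒟⁻)`. -/

section Pi2

variable {n : ℕ}

theorem pi2_eq_true_iff {ι : Type*} [Fintype ι] (C : ι → Finset (Fin n)) (i j : Fin n) :
    Pi2 C i j = true ↔ ∀ k, i ∈ C k → j ∈ C k := by
  simp only [Pi2, oDot, Mrep, decide_eq_true_eq, Bool.le_iff_imp]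

theorem pi2_sigma_eq_true_iff {τ : Type*} [Fintype τ] {κ : τ → Type*} [∀ t, Fintype (κ t)]
    (D : (t : τ) → κ t → Finset (Fin n)) (i j : Fin n) :
    Pi2 (fun q : Σ t, κ t => D q.1 q.2) i j = true ↔ ∀ t, Pi2 (D t) i j = true := by
  simp only [pi2_eq_true_iff, Sigma.forall]

theorem pi2_sigma_fin_succ {m : ℕ} {κ : Fin (m + 1) → Type*} [∀ t, Fintype (κ t)]
    (D : (t : Fin (m + 1)) → κ t → Finset (Fin n)) (i j : Fin n) :
    Pi2 (fun q : Σ t, κ t => D q.1 q.2) i j =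
      (Pi2 (fun q : Σ t : Fin m, κ t.castSucc => D q.1.castSucc q.2) i j &&
        Pi2 (D (Fin.last m)) i j) := by
  rw [Bool.eq_iff_iff, Bool.and_eq_true, pi2_sigma_eq_true_iff,
    pi2_sigma_eq_true_iff (fun t : Fin m => D t.castSucc), Fin.forall_fin_succ']

end Pi2

theorem pi_delete_covering_general {n m : ℕ} (c : Fin (m + 1) → ℕ)
    (D : (t : Fin (m + 1)) → Fin (c t) → Finset (Fin n)) :
    ∀ i j : Fin n,
      (Pi2 (fun q : Σ t : Fin (m + 1), Fin (c t) => D q.1 q.2) i j = true →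
        Pi2 (D (Fin.last m)) i j = true →
        Pi2 (fun q : Σ t : Fin m, Fin (c t.castSucc) => D q.1.castSucc q.2) i j
          = true) ∧
      (Pi2 (fun q : Σ t : Fin (m + 1), Fin (c t) => D q.1 q.2) i j = false →
        Pi2 (D (Fin.last m)) i j = true →
        Pi2 (fun q : Σ t : Fin m, Fin (c t.castSucc) => D q.1.castSucc q.2) i j
          = false) ∧
      (Pi2 (fun q : Σ t : Fin (m + 1), Fin (c t) => D q.1 q.2) i j = false →
        Pi2 (D (Fin.last m)) i j = false →
        Pi2 (fun q : Σ t : Fin m, Fin (c t.castSucc) => D q.1.castSucc q.2) i j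
          = oDot (Mrep (fun q : Σ t : Fin m, Fin (c t.castSucc) => D q.1.castSucc q.2))
              (fun k j => Mrep (fun q : Σ t : Fin m, Fin (c t.castSucc) =>
                D q.1.castSucc q.2) j k) i j) := by
  intro i j
  rw [pi2_sigma_fin_succ D i j]
  refine ⟨?_, ?_, fun _ _ => rfl⟩ <;>
    cases Pi2 (fun q : Σ t : Fin m, Fin (c t.castSucc) => D q.1.castSucc q.2) i j <;>
    simp

/-- Theorem 3.21: deleting the last covering 𝒞_m from 𝒟 = {𝒞₁,…,𝒞_m} (m ≥ 2).
With `Π(𝒟) = (d_ij)`, `Π(𝒟⁻) = (e⁻_ij)` and `Δe_ij = Π({𝒞_m})_ij`: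
if `d_ij = 1` and `Δe_ij = 1` then `e⁻_ij = 1`; if `d_ij = 0` and `Δe_ij = 1`
then `e⁻_ij = 0`; and if `d_ij = 0` and `Δe_ij = 0` then `e⁻_ij` is the
`⊙`-product of the `i`-th row of `M_{𝒟⁻}` with the transpose of its `j`-th row. -/
theorem pi_delete_covering {n m : ℕ} (hm : 1 ≤ m) (c : Fin (m + 1) → ℕ)
    (D : (t : Fin (m + 1)) → Fin (c t) → Finset (Fin n))
    (hD : ∀ t, IsCovering (D t)) :
    ∀ i j : Fin n,
      (Pi2 (fun q : Σ t : Fin (m + 1), Fin (c t) => D q.1 q.2) i j = true →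
        Pi2 (D (Fin.last m)) i j = true →
        Pi2 (fun q : Σ t : Fin m, Fin (c t.castSucc) => D q.1.castSucc q.2) i j
          = true) ∧
      (Pi2 (fun q : Σ t : Fin (m + 1), Fin (c t) => D q.1 q.2) i j = false →
        Pi2 (D (Fin.last m)) i j = true →
        Pi2 (fun q : Σ t : Fin m, Fin (c t.castSucc) => D q.1.castSucc q.2) i j
          = false) ∧
      (Pi2 (fun q : Σ t : Fin (m + 1), Fin (c t) => D q.1 q.2) i j = false →
        Pi2 (D (Fin.last m)) i j = false →
        Pi2 (fun q : Σ t : Fin m, Fin (c t.castSucc) => D q.1.castSucc q.2) i j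
          = oDot (Mrep (fun q : Σ t : Fin m, Fin (c t.castSucc) => D q.1.castSucc q.2))
              (fun k j => Mrep (fun q : Σ t : Fin m, Fin (c t.castSucc) =>
                D q.1.castSucc q.2) j k) i j) :=
  pi_delete_covering_general c D
end

section
/- Let 𝒟 = {𝒞₁,…,𝒞_m} be a family of coverings of the finite universe U = {x₁,…,xₙ}, and let 𝒞 = 𝒞₁ ∪ ⋯ ∪ 𝒞_m be the covering of U consisting of all blocks of all members of 𝒟. Then for all i, j: the (i,j) entry of the type-2 characteristic matrix Π(𝒟) = M_𝒟 ⊙ M_𝒟ᵀ equals 1 if and only if x_j ∈ N(x_i), where N(x) = ⋂{C ∈ 𝒞 : x ∈ C}. -/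
/-- The neighborhood of `x` with respect to all blocks of all coverings in the
family: `N(x) = ⋂ {C : x ∈ C}`. -/
def Nall {n m : ℕ} {c : Fin m → ℕ}
    (D : (t : Fin m) → Fin (c t) → Finset (Fin n)) (x : Fin n) : Set (Fin n) :=
  ⋂ (t : Fin m), ⋂ (k : Fin (c t)), ⋂ (_ : x ∈ D t k), (D t k : Set (Fin n))

theorem oDot_eq_true_iff {α β γ : Type*} [Fintype β] (A : α → β → Bool) (B : β → γ → Bool)
    (i : α) (j : γ) : oDot A B i j = true ↔ ∀ k, A i k = true → B k j = true := by
  simp only [oDot, decide_eq_true_eq, Bool.le_iff_imp]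

theorem mem_Nall_iff {n m : ℕ} {c : Fin m → ℕ} (D : (t : Fin m) → Fin (c t) → Finset (Fin n))
    (i j : Fin n) : j ∈ Nall D i ↔ ∀ t k, i ∈ D t k → j ∈ D t k := by
  simp only [Nall, Set.mem_iInter, Finset.mem_coe]

theorem pi_entry_iff_general {n m : ℕ} (c : Fin m → ℕ)
    (D : (t : Fin m) → Fin (c t) → Finset (Fin n)) :
    ∀ i j : Fin n,
      Pi2 (fun q : Σ t : Fin m, Fin (c t) => D q.1 q.2) i j = true ↔
        j ∈ Nall D i := by
  intro i j
  rw [Pi2_eq_true_iff, mem_Nall_iff, Sigma.forall]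

/-- `Π(𝒟)_{ij} = 1` iff `x_j ∈ N(x_i)`, where `N(x)` is the intersection of all
blocks (of all coverings of 𝒟) containing `x`. -/
theorem pi_entry_iff {n m : ℕ} (c : Fin m → ℕ)
    (D : (t : Fin m) → Fin (c t) → Finset (Fin n))
    (hD : ∀ t, IsCovering (D t)) :
    ∀ i j : Fin n,
      Pi2 (fun q : Σ t : Fin m, Fin (c t) => D q.1 q.2) i j = true ↔
        j ∈ Nall D i :=
  pi_entry_iff_general c D
end

section
/- (Correctness of the incremental algorithm IS.) Let 𝒟 = {𝒞₁,…,𝒞_m} be a family of coverings of the finite universe U = {x₁,…,xₙ}, let 𝒟⁺ = {𝒞₁,…,𝒞_m,𝒞_{m+1}}, let 𝒞 = 𝒞₁ ∪ ⋯ ∪ 𝒞_{m+1} be the covering consisting of all blocks of all members of 𝒟⁺, and set G = Γ(𝒟) ∨ Γ({𝒞_{m+1}}). Then for every X ⊆ U and every i: the i-th entry of the Boolean product G • χ_X equals 1 if and only if x_i ∈ SH_𝒞(X), and the i-th entry of G ⊙ χ_X equals 1 if and only if x_i ∈ SL_𝒞(X). -/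
/-- Second upper approximation of `X` w.r.t. the covering consisting of the
blocks of an indexed family: `SH_𝒞(X) = ⋃ {C ∈ 𝒞 : C ∩ X ≠ ∅}`. -/
def SHfam {n : ℕ} {ι : Type*} (C : ι → Finset (Fin n)) (X : Finset (Fin n)) :
    Set (Fin n) :=
  ⋃ (k) (_ : ((C k : Set (Fin n)) ∩ (X : Set (Fin n))).Nonempty), (C k : Set (Fin n))

/-- Second lower approximation: `SL_𝒞(X) = (SH_𝒞(Xᶜ))ᶜ`. -/
def SLfam {n : ℕ} {ι : Type*} (C : ι → Finset (Fin n)) (X : Finset (Fin n)) :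
    Set (Fin n) :=
  (SHfam C Xᶜ)ᶜ

/-- Characteristic (column) vector of `X`. -/
def chi {n : ℕ} (X : Finset (Fin n)) : Fin n → Unit → Bool :=
  fun i _ => decide (i ∈ X)

/-!
`Γ(𝒞)` relates `x_i` and `x_j` exactly when some block of `𝒞` contains both, and the
entrywise maximum of the characteristic matrices of two families is the characteristic
matrix of their union. Hence `G = Γ(𝒞)`, and the `i`-th entry of `Γ(𝒞) • χ_X` says that
some block through `x_i` meets `X`, while that of `Γ(𝒞) ⊙ χ_X` says that no block through
`x_i` meets `Xᶜ`.
-/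

variable {n : ℕ} {ι κ : Type*} [Fintype ι]

theorem gamma_eq_true_iff (C : ι → Finset (Fin n)) (a b : Fin n) :
    Gamma C a b = true ↔ ∃ k, a ∈ C k ∧ b ∈ C k := by
  simp only [Gamma, bDot, Mrep, decide_eq_true_eq]

theorem gamma_or_gamma_eq_gamma_sumElim [Fintype κ] (C : ι → Finset (Fin n))
    (C' : κ → Finset (Fin n)) :
    (fun a b => Gamma C a b || Gamma C' a b) = Gamma (Sum.elim C C') := by
  ext a b
  rw [Bool.eq_iff_iff]
  simp only [Bool.or_eq_true, gamma_eq_true_iff, Sum.exists, Sum.elim_inl,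
    Sum.elim_inr]

theorem bDot_gamma_chi_eq_true_iff (C : ι → Finset (Fin n)) (X : Finset (Fin n))
    (i : Fin n) : bDot (Gamma C) (chi X) i () = true ↔ i ∈ SHfam C X := by
  simp only [bDot, chi, SHfam, gamma_eq_true_iff, decide_eq_true_eq, Set.mem_iUnion,
    Set.Nonempty, Set.mem_inter_iff, Finset.mem_coe]
  constructor
  · rintro ⟨j, ⟨k, hik, hjk⟩, hjX⟩
    exact ⟨k, ⟨j, hjk, hjX⟩, hik⟩
  · rintro ⟨k, ⟨j, hjk, hjX⟩, hik⟩
    exact ⟨j, ⟨k, hik, hjk⟩, hjX⟩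

theorem oDot_gamma_chi_eq_true_iff (C : ι → Finset (Fin n)) (X : Finset (Fin n))
    (i : Fin n) : oDot (Gamma C) (chi X) i () = true ↔ i ∈ SLfam C X := by
  simp only [oDot, chi, SLfam, SHfam, Bool.le_iff_imp, gamma_eq_true_iff, decide_eq_true_eq,
    Set.mem_compl_iff, Set.mem_iUnion, Set.Nonempty, Set.mem_inter_iff, Finset.coe_compl,
    Finset.mem_coe, not_exists]
  constructor
  · rintro h k ⟨j, hjk, hjX⟩ hik
    exact hjX (h j ⟨k, hik, hjk⟩)
  · rintro h j ⟨k, hik, hjk⟩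
    by_contra hjX
    exact h k ⟨j, hjk, hjX⟩ hik

theorem is_algorithm_correct_general {n m : ℕ} (c : Fin m → ℕ) (c' : ℕ)
    (D : (t : Fin m) → Fin (c t) → Finset (Fin n))
    (C' : Fin c' → Finset (Fin n)) :
    ∀ (X : Finset (Fin n)) (i : Fin n),
      (bDot (fun a b : Fin n =>
            Gamma (fun q : Σ t : Fin m, Fin (c t) => D q.1 q.2) a b || Gamma C' a b)
          (chi X) i () = true ↔
        i ∈ SHfam (Sum.elim (fun q : Σ t : Fin m, Fin (c t) => D q.1 q.2) C') X) ∧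
      (oDot (fun a b : Fin n =>
            Gamma (fun q : Σ t : Fin m, Fin (c t) => D q.1 q.2) a b || Gamma C' a b)
          (chi X) i () = true ↔
        i ∈ SLfam (Sum.elim (fun q : Σ t : Fin m, Fin (c t) => D q.1 q.2) C') X) := by
  intro X i
  rw [gamma_or_gamma_eq_gamma_sumElim]
  exact ⟨bDot_gamma_chi_eq_true_iff _ X i, oDot_gamma_chi_eq_true_iff _ X i⟩

/-- Correctness of the incremental algorithm IS: with
`G = Γ(𝒟) ∨ Γ({𝒞_{m+1}})`, the entries of `G • χ_X` (resp. `G ⊙ χ_X`) are the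
characteristic function of `SH_𝒞(X)` (resp. `SL_𝒞(X)`), where 𝒞 consists of
all blocks of all coverings of 𝒟⁺. -/
theorem is_algorithm_correct {n m : ℕ} (c : Fin m → ℕ) (c' : ℕ)
    (D : (t : Fin m) → Fin (c t) → Finset (Fin n))
    (C' : Fin c' → Finset (Fin n))
    (hD : ∀ t, IsCovering (D t)) (hC' : IsCovering C') :
    ∀ (X : Finset (Fin n)) (i : Fin n),
      (bDot (fun a b : Fin n =>
            Gamma (fun q : Σ t : Fin m, Fin (c t) => D q.1 q.2) a b || Gamma C' a b)
          (chi X) i () = true ↔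
        i ∈ SHfam (Sum.elim (fun q : Σ t : Fin m, Fin (c t) => D q.1 q.2) C') X) ∧
      (oDot (fun a b : Fin n =>
            Gamma (fun q : Σ t : Fin m, Fin (c t) => D q.1 q.2) a b || Gamma C' a b)
          (chi X) i () = true ↔
        i ∈ SLfam (Sum.elim (fun q : Σ t : Fin m, Fin (c t) => D q.1 q.2) C') X) :=
  is_algorithm_correct_general c c' D C'
end

section
/- (Correctness of the incremental algorithm IX.) Let 𝒟 = {𝒞₁,…,𝒞_m} be a family of coverings of the finite universe U = {x₁,…,xₙ}, let 𝒟⁺ = {𝒞₁,…,𝒞_m,𝒞_{m+1}}, let 𝒞 = 𝒞₁ ∪ ⋯ ∪ 𝒞_{m+1} be the covering consisting of all blocks of all members of 𝒟⁺, and set P = Π(𝒟) ∧ Π({𝒞_{m+1}}). Then for every X ⊆ U and every i: the i-th entry of the Boolean product P • χ_X equals 1 if and only if N_𝒞(x_i) ∩ X ≠ ∅ (i.e., x_i ∈ XH_𝒞(X)), and the i-th entry of P ⊙ χ_X equals 1 if and only if N_𝒞(x_i) ⊆ X (i.e., x_i ∈ XL_𝒞(X)). -/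
/-- Neighborhood of `x` w.r.t. the covering consisting of the blocks of an
indexed family: `N_𝒞(x) = ⋂ {C ∈ 𝒞 : x ∈ C}`. -/
def Nfam {n : ℕ} {ι : Type*} (C : ι → Finset (Fin n)) (x : Fin n) : Set (Fin n) :=
  ⋂ (k) (_ : x ∈ C k), (C k : Set (Fin n))

lemma pi2_mem {n : ℕ} {ι : Type*} [Fintype ι] (C : ι → Finset (Fin n)) (a b : Fin n) :
    Pi2 C a b = true ↔ b ∈ Nfam C a := by
  simp [Pi2, oDot, Mrep, Nfam, Bool.le_iff_imp]

/-- Correctness of the incremental algorithm IX: with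
`P = Π(𝒟) ∧ Π({𝒞_{m+1}})`, the entries of `P • χ_X` (resp. `P ⊙ χ_X`) are the
characteristic function of `XH_𝒞(X) = {x : N_𝒞(x) ∩ X ≠ ∅}` (resp.
`XL_𝒞(X) = {x : N_𝒞(x) ⊆ X}`), where 𝒞 consists of all blocks of all
coverings of 𝒟⁺. -/
theorem ix_algorithm_correct {n m : ℕ} (c : Fin m → ℕ) (c' : ℕ)
    (D : (t : Fin m) → Fin (c t) → Finset (Fin n))
    (C' : Fin c' → Finset (Fin n))
    (hD : ∀ t, IsCovering (D t)) (hC' : IsCovering C') :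
    ∀ (X : Finset (Fin n)) (i : Fin n),
      (bDot (fun a b : Fin n =>
            Pi2 (fun q : Σ t : Fin m, Fin (c t) => D q.1 q.2) a b && Pi2 C' a b)
          (chi X) i () = true ↔
        (Nfam (Sum.elim (fun q : Σ t : Fin m, Fin (c t) => D q.1 q.2) C') i
          ∩ (X : Set (Fin n))).Nonempty) ∧
      (oDot (fun a b : Fin n =>
            Pi2 (fun q : Σ t : Fin m, Fin (c t) => D q.1 q.2) a b && Pi2 C' a b)
          (chi X) i () = true ↔
        Nfam (Sum.elim (fun q : Σ t : Fin m, Fin (c t) => D q.1 q.2) C') i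
          ⊆ (X : Set (Fin n))) := by
  intro X i
  have hP : ∀ b, (Pi2 (fun q : Σ t : Fin m, Fin (c t) => D q.1 q.2) i b && Pi2 C' i b) = true ↔
      b ∈ Nfam (Sum.elim (fun q : Σ t : Fin m, Fin (c t) => D q.1 q.2) C') i := by
    intro b
    rw [Bool.and_eq_true, pi2_mem, pi2_mem]
    simp only [Nfam, Set.mem_iInter, Finset.mem_coe]
    constructor
    · rintro ⟨h1, h2⟩ (k|k) <;> simp_all
    · intro h
      exact ⟨fun q hq => h (Sum.inl q) hq, fun q hq => h (Sum.inr q) hq⟩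
  constructor
  · rw [bDot]
    simp only [decide_eq_true_eq, chi, Set.Nonempty, Set.mem_inter_iff, Finset.mem_coe]
    constructor
    · rintro ⟨k, hk, hkX⟩
      exact ⟨k, (hP k).1 hk, by simpa using hkX⟩
    · rintro ⟨k, hk, hkX⟩
      exact ⟨k, (hP k).2 hk, by simpa using hkX⟩
  · rw [oDot]
    simp only [decide_eq_true_eq, chi, Set.subset_def, Finset.mem_coe, Bool.le_iff_imp]
    constructor
    · intro h k hk
      simpa using h k ((hP k).2 hk)
    · intro h k hk
      simpa using h k ((hP k).1 hk)
end
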